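/- Consider a VASS on C = Q × ℕ^d and a subset Q_P ⊆ Q such that every transition from a state in Q_P has zero effect on counters (i.e., (q,z,q') ∈ T with q ∈ Q_P implies z = 0). Then for any upward-closed set U, the set {(q,v) | q ∈ Q_P and ∀c', (q,v) → c' implies c' ∈ U} is upward-closed. -/
import Mathlib

/-- A VASS step: transition `(q, z, q')` maps `(q, v)` to `(q', v + z)`
whenever the result stays in `ℕ^d`. -/
def vassStep {Q : Type*} {d : ℕ} (T : Finset (Q × (Fin d → ℤ) × Q))
    (c c' : Q × (Fin d → ℕ)) : Prop :=
  ∃ t ∈ T, c.1 = t.1 ∧ c'.1 = t.2.2 ∧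
    ∀ k, (c'.2 k : ℤ) = (c.2 k : ℤ) + t.2.1 k

theorem stmt_12 {Q : Type*} {d : ℕ} (T : Finset (Q × (Fin d → ℤ) × Q))
    (QP : Set Q)
    (hP : ∀ t ∈ T, t.1 ∈ QP → t.2.1 = 0)
    (U : Set (Q × (Fin d → ℕ)))
    (hU : ∀ c ∈ U, ∀ c' : Q × (Fin d → ℕ), c.1 = c'.1 → c.2 ≤ c'.2 → c' ∈ U) :
    ∀ c ∈ {c : Q × (Fin d → ℕ) | c.1 ∈ QP ∧ ∀ c', vassStep T c c' → c' ∈ U},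
      ∀ c'' : Q × (Fin d → ℕ), c.1 = c''.1 → c.2 ≤ c''.2 →
        c'' ∈ {c : Q × (Fin d → ℕ) | c.1 ∈ QP ∧ ∀ c', vassStep T c c' → c' ∈ U} := by
  rintro ⟨q, v⟩ ⟨hq, hstep⟩ ⟨q', w⟩ heq hle
  cases heq
  refine ⟨hq, ?_⟩
  rintro c' ⟨t, ht, h1, h2, h3⟩
  have hz : t.2.1 = 0 := hP t ht (h1 ▸ hq)
  have hc'2 : c'.2 = w := by
    funext k
    have := h3 k
    rw [hz] at this
    simpa using this
  have hmem : (t.2.2, v) ∈ U := by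
    apply hstep
    exact ⟨t, ht, h1, rfl, fun k => by simp [hz]⟩
  have := hU _ hmem c' (by simp [h2]) (by rw [hc'2]; exact hle)
  exact this
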